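/- For all real x ≥ 0 and all M ≥ 1 with x ≤ M, one has (√x − 1)² ≤ x ln x − x + 1 ≤ (2 + ln M)(√x − 1)², where x ln x is interpreted as 0 at x = 0. -/

import Mathlib

/-!
Put `t = √x`, so that `x ln x − x + 1 = 2t² ln t − t² + 1`. The lower bound is `t ln t ≥ t − 1`.
For the upper bound, the excess of the right side over the left is controlled by the logarithmic
mean inequalities: `ln t ≤ 2(t − 1)/(t + 1)` for `t ≤ 1` (where `ln M ≥ 0` is simply dropped) and
`ln t ≤ (t − t⁻¹)/2` for `t ≥ 1` (where `ln M ≥ ln x = 2 ln t`).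
-/

open Real InformationTheory

namespace Real

lemma log_le_sub_inv_div_two {t : ℝ} (ht : 1 ≤ t) : log t ≤ (t - t⁻¹) / 2 := by
  rw [← sinh_log (by linarith)]
  exact self_le_sinh_iff.mpr (log_nonneg ht)

/-- The first term of the series `log ((1 + y) / (1 - y)) = 2 (y + y³/3 + ⋯)` at
`y = (1 - t) / (1 + t)`. -/
lemma log_le_two_mul_sub_one_div_add_one {t : ℝ} (ht0 : 0 < t) (ht1 : t ≤ 1) :
    log t ≤ 2 * (t - 1) / (t + 1) := by
  have hy0 : 0 ≤ (1 - t) / (1 + t) := div_nonneg (by linarith) (by linarith)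
  have hy1 : (1 - t) / (1 + t) < 1 := by rw [div_lt_one (by linarith)]; linarith
  have hquot : (1 + (1 - t) / (1 + t)) / (1 - (1 - t) / (1 + t)) = t⁻¹ := by
    field_simp [ht0.ne', (by linarith : 1 + t ≠ 0)]
    ring
  have h := sum_range_le_log_div hy0 hy1 1
  rw [hquot, log_inv] at h
  norm_num at h
  rw [div_le_iff₀ (by linarith)] at h
  rw [le_div_iff₀ (by linarith)]
  linarith

end Real

namespace InformationTheory

lemma klFun_sq (t : ℝ) : klFun (t ^ 2) = 2 * t ^ 2 * log t + 1 - t ^ 2 := by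
  rw [klFun_apply, log_pow]
  push_cast
  ring

lemma sub_one_sq_le_klFun_sq {t : ℝ} (ht : 0 ≤ t) : (t - 1) ^ 2 ≤ klFun (t ^ 2) := by
  have h := mul_le_mul_of_nonneg_left (self_sub_one_le_mul_log ht) (by positivity : 0 ≤ 2 * t)
  rw [klFun_sq]
  linarith

lemma klFun_sq_le_two_mul_sub_one_sq {t : ℝ} (ht0 : 0 ≤ t) (ht1 : t ≤ 1) :
    klFun (t ^ 2) ≤ 2 * (t - 1) ^ 2 := by
  rcases ht0.eq_or_lt with rfl | ht0
  · norm_num [klFun_apply]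
  have hlog := log_le_two_mul_sub_one_div_add_one ht0 ht1
  calc klFun (t ^ 2) ≤ 2 * t ^ 2 * (2 * (t - 1) / (t + 1)) + 1 - t ^ 2 := by
        rw [klFun_sq]; gcongr
    _ ≤ 2 * (t - 1) ^ 2 := by
        rw [mul_div_assoc', div_add' _ _ _ (by linarith), div_sub' (by linarith),
          div_le_iff₀ (by linarith)]
        -- the gap is `(1 - t)³`
        nlinarith [pow_nonneg (sub_nonneg.2 ht1) 3]

lemma klFun_sq_le_two_add_log_sq_mul_sub_one_sq {t : ℝ} (ht : 1 ≤ t) :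
    klFun (t ^ 2) ≤ (2 + log (t ^ 2)) * (t - 1) ^ 2 := by
  have hlog := mul_le_mul_of_nonneg_left (log_le_sub_inv_div_two ht) (by linarith : 0 ≤ 2 * t - 1)
  have hinv : t * t⁻¹ = 1 := mul_inv_cancel₀ (by positivity)
  rw [klFun_sq, log_pow]
  push_cast
  -- the gap is `(t - 1)³ / t`
  nlinarith [pow_nonneg (sub_nonneg.2 ht) 3]

end InformationTheory

/-- For all `x ≥ 0`, `M ≥ 1` with `x ≤ M`,
`(√x − 1)² ≤ x ln x − x + 1 ≤ (2 + ln M)(√x − 1)²` (with `x ln x = 0` at `x = 0`). -/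
theorem sqrt_sub_one_sq_le_xlogx (x M : ℝ) (hx : 0 ≤ x) (hM : 1 ≤ M) (hxM : x ≤ M) :
    (Real.sqrt x - 1)^2 ≤ x * Real.log x - x + 1 ∧
    x * Real.log x - x + 1 ≤ (2 + Real.log M) * (Real.sqrt x - 1)^2 := by
  obtain ⟨t, ht, rfl⟩ : ∃ t, 0 ≤ t ∧ x = t ^ 2 := ⟨√x, sqrt_nonneg x, (sq_sqrt hx).symm⟩
  have hklFun : t ^ 2 * log (t ^ 2) - t ^ 2 + 1 = klFun (t ^ 2) := by rw [klFun_apply]; ring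
  rw [sqrt_sq ht, hklFun]
  refine ⟨sub_one_sq_le_klFun_sq ht, ?_⟩
  rcases le_total t 1 with ht1 | ht1
  · calc klFun (t ^ 2) ≤ 2 * (t - 1) ^ 2 := klFun_sq_le_two_mul_sub_one_sq ht ht1
      _ ≤ (2 + log M) * (t - 1) ^ 2 := by gcongr; linarith [log_nonneg hM]
  · calc klFun (t ^ 2) ≤ (2 + log (t ^ 2)) * (t - 1) ^ 2 :=
          klFun_sq_le_two_add_log_sq_mul_sub_one_sq ht1
      _ ≤ (2 + log M) * (t - 1) ^ 2 := by gcongr
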